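/- Lemma 3.3 (difference representation): Let V_t(y,x), t = 0,...,T, be any set of approximations to the value function with V_T(y,x) = sup_{h∈K_T(y,x)} H_T(h,x), and define the dual upper estimate V^↑_t using the martingale generated by V (Doob decomposition increments M^y_{t+1} - M^y_t = V_{t+1}(y, X_{t+1}) - E_t[V_{t+1}(y, X_{t+1})]). Then V^↑_t(y,x) - V_t(y,x) = E[ sup over admissible policies π ∈ P_{K,y,t} of Σ_{s=t}^{T-1} ( H_s(h_s, X_s) + E_s[V_{s+1}(y_{s+1}, X_{s+1})] - V_s(y_s, X_s) ) | X_t = x ]. -/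

import Mathlib

/-! Along any admissible policy, the dual payoff minus the sum of the Bellman residuals
`H_s(h_s) + E_s[V_{s+1}(y_{s+1})] - V_s(y_s)` telescopes to
`∑ (V_s(y_s) - V_{s+1}(y_{s+1})) + H_T(h_T) = V_t(y, X_t)`, because `V_T(y_T) = H_T(h_T)`.
This shift does not depend on the policy, so it passes through the supremum over policies and,
being `ℱ t`-measurable, through the conditional expectation. On a finite sample space the almost
sure identities hold for all policies at once, and the supremum over policies is measurable
because every policy is constant on the measurable atoms. -/

open MeasureTheory Finset

section Setup

variable {Ω : Type*}

/-- Control value at time `t`, starting from `y0` at time `t0`: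
`y_t = y0 - ∑_{t0 ≤ s < t} h_s`. -/
noncomputable def ctrl {E : Type*} [AddCommGroup E] (y0 : E) (h : ℕ → Ω → E)
    (t0 t : ℕ) (ω : Ω) : E :=
  y0 - ∑ s ∈ Finset.Ico t0 t, h s ω

/-- A `K`-admissible exercise policy on `{t0, …, T}` started at `y0`:
each `h_s` is `ℱ s`-measurable and a.s. `h_s(ω) ∈ K_s(y_s, X_s(ω))`. -/
def Admissible {E S : Type*} [AddCommGroup E] [MeasurableSpace E]
    {m0 : MeasurableSpace Ω} (μ : Measure Ω) (ℱ : Filtration ℕ m0) (T : ℕ)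
    (K : ℕ → E → S → Set E) (X : ℕ → Ω → S) (t0 : ℕ) (y0 : E)
    (h : ℕ → Ω → E) : Prop :=
  (∀ s, Measurable[ℱ s] (h s)) ∧
  (∀ᵐ ω ∂μ, ∀ s, t0 ≤ s → s ≤ T → h s ω ∈ K s (ctrl y0 h t0 s ω) (X s ω))

/-- The value of a policy at time `t0`:
`V^π_{t0} = E[∑_{s=t0}^T H_s(h_s, X_s) | ℱ_{t0}]`. -/
noncomputable def polValue {E S : Type*}
    {m0 : MeasurableSpace Ω} (μ : Measure Ω) (ℱ : Filtration ℕ m0) (T : ℕ)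
    (H : ℕ → E → S → ℝ) (X : ℕ → Ω → S) (t0 : ℕ)
    (h : ℕ → Ω → E) : Ω → ℝ :=
  μ[fun ω => ∑ s ∈ Finset.Icc t0 T, H s (h s ω) (X s ω) | ℱ t0]

/-- The value function `V^{K,*}_{t0}(y0)` as the supremum of policy values over
the `K`-admissible policies started at `y0` at time `t0`. -/
noncomputable def valueFn {E S : Type*} [AddCommGroup E] [MeasurableSpace E]
    {m0 : MeasurableSpace Ω} (μ : Measure Ω) (ℱ : Filtration ℕ m0) (T : ℕ)
    (H : ℕ → E → S → ℝ) (K : ℕ → E → S → Set E) (X : ℕ → Ω → S)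
    (t0 : ℕ) (y0 : E) : Ω → ℝ :=
  fun ω => ⨆ π : {h : ℕ → Ω → E // Admissible μ ℱ T K X t0 y0 h},
    polValue μ ℱ T H X t0 π.1 ω

end Setup

section Dual

variable {Ω : Type*}

/-- One-step conditional expectation of an approximation family:
`condV μ ℱ V X s y' = E[V_{s+1}(y', X_{s+1}) | ℱ s]`. -/
noncomputable def condV {m0 : MeasurableSpace Ω} (μ : Measure Ω)
    (ℱ : Filtration ℕ m0) {l d : ℕ}
    (V : ℕ → (Fin l → ℝ) → (Fin d → ℝ) → ℝ) (X : ℕ → Ω → (Fin d → ℝ))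
    (s : ℕ) (y' : Fin l → ℝ) : Ω → ℝ :=
  μ[fun ω => V (s + 1) y' (X (s + 1) ω) | ℱ s]

/-- The dual upper estimate `V^↑_t(y)` built from the approximation family `V`
via its Doob-decomposition martingale increments
`M^{y}_{s+1} - M^{y}_s = V_{s+1}(y, X_{s+1}) - E_s[V_{s+1}(y, X_{s+1})]`. -/
noncomputable def dualEstimate {m0 : MeasurableSpace Ω} (μ : Measure Ω)
    (ℱ : Filtration ℕ m0) {l d : ℕ} (T : ℕ)
    (H : ℕ → (Fin l → ℝ) → (Fin d → ℝ) → ℝ)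
    (K : ℕ → (Fin l → ℝ) → (Fin d → ℝ) → Set (Fin l → ℝ))
    (V : ℕ → (Fin l → ℝ) → (Fin d → ℝ) → ℝ) (X : ℕ → Ω → (Fin d → ℝ))
    (t : ℕ) (y : Fin l → ℝ) : Ω → ℝ :=
  μ[fun ω => ⨆ π : {h : ℕ → Ω → (Fin l → ℝ) // Admissible μ ℱ T K X t y h},
      ((∑ s ∈ Finset.Ico t T,
          (H s (π.1 s ω) (X s ω)
            - V (s + 1) (ctrl y π.1 t (s + 1) ω) (X (s + 1) ω)
            + condV μ ℱ V X s (ctrl y π.1 t (s + 1) ω) ω))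
        + H T (π.1 T ω) (X T ω)) | ℱ t]

end Dual


section Atoms

variable {Ω β : Type*} {mΩ : MeasurableSpace Ω} [MeasurableSpace β]

lemma Measurable.eq_of_mem_measurableAtom [MeasurableSingletonClass β] {f : Ω → β}
    (hf : Measurable f) {ω ω' : Ω} (h : ω' ∈ measurableAtom ω) : f ω' = f ω :=
  mem_of_mem_measurableAtom h (hf (measurableSet_singleton (f ω))) rfl

lemma measurable_of_forall_mem_measurableAtom [Countable Ω] {f : Ω → β}
    (hf : ∀ ω, ∀ ω' ∈ measurableAtom ω, f ω' = f ω) : Measurable f := by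
  intro S _
  have hS : f ⁻¹' S = ⋃ ω ∈ f ⁻¹' S, measurableAtom ω := by
    ext ω'
    simp only [Set.mem_preimage, Set.mem_iUnion]
    exact ⟨fun h => ⟨ω', h, mem_measurableAtom_self ω'⟩,
      fun ⟨ω, hω, h⟩ => hf ω ω' h ▸ hω⟩
  rw [hS]
  exact .biUnion (Set.to_countable _) fun ω _ => .measurableAtom_of_countable ω

lemma ae_forall_of_countable [Countable Ω] {μ : Measure Ω} {ι : Sort*} {p : ι → Ω → Prop}
    (h : ∀ i, ∀ᵐ ω ∂μ, p i ω) : ∀ᵐ ω ∂μ, ∀ i, p i ω :=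
  ae_iff_of_countable.2 fun ω hω i => ae_iff_of_countable.1 (h i) ω hω

end Atoms

lemma abs_ciSup_le {ι : Sort*} [Nonempty ι] {f : ι → ℝ} {B : ℝ} (h : ∀ i, |f i| ≤ B) :
    |⨆ i, f i| ≤ B := by
  have hbdd : BddAbove (Set.range f) := ⟨B, by rintro _ ⟨i, rfl⟩; exact (abs_le.1 (h i)).2⟩
  obtain ⟨i⟩ := ‹Nonempty ι›
  exact abs_le.2 ⟨(abs_le.1 (h i)).1.trans (le_ciSup hbdd i),
    ciSup_le fun i => (abs_le.1 (h i)).2⟩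

lemma sum_Ico_sub_succ_add_eq {M : Type*} [AddCommGroup M] {t T : ℕ} (ht : t ≤ T)
    (a c v : ℕ → M) :
    (∑ s ∈ Ico t T, (a s - v (s + 1) + c s)) + v T
      = (∑ s ∈ Ico t T, (a s + c s - v s)) + v t := by
  have hsplit : ∑ s ∈ Ico t T, (a s - v (s + 1) + c s)
      = ∑ s ∈ Ico t T, (a s + c s - v s) - ∑ s ∈ Ico t T, (v (s + 1) - v s) := by
    rw [← sum_sub_distrib]
    exact sum_congr rfl fun _ _ => by abel
  rw [hsplit, sum_Ico_sub v ht]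
  abel

theorem condExp_ciSup_add_ae_eq {Ω : Type*} {m m0 : MeasurableSpace Ω} {μ : Measure Ω}
    [IsFiniteMeasure μ] (hm : m ≤ m0) {ι : Type*} [Nonempty ι] {f : ι → Ω → ℝ}
    {c : Ω → ℝ} {B : ℝ} (hf : AEStronglyMeasurable (fun ω => ⨆ i, f i ω) μ)
    (hfB : ∀ᵐ ω ∂μ, ∀ i, |f i ω| ≤ B) (hc : StronglyMeasurable[m] c) (hci : Integrable c μ) :
    μ[fun ω => ⨆ i, (f i ω + c ω) | m] =ᵐ[μ] μ[fun ω => ⨆ i, f i ω | m] + c := by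
  have hfi : Integrable (fun ω => ⨆ i, f i ω) μ :=
    .of_bound hf B (hfB.mono fun ω hω => abs_ciSup_le hω)
  have hsup : (fun ω => ⨆ i, (f i ω + c ω)) =ᵐ[μ] (fun ω => ⨆ i, f i ω) + c :=
    hfB.mono fun ω hω => (ciSup_add ⟨B, by rintro _ ⟨i, rfl⟩; exact (abs_le.1 (hω i)).2⟩ _).symm
  calc μ[fun ω => ⨆ i, (f i ω + c ω) | m]
      =ᵐ[μ] μ[(fun ω => ⨆ i, f i ω) + c | m] := condExp_congr_ae hsup
    _ =ᵐ[μ] μ[fun ω => ⨆ i, f i ω | m] + μ[c | m] := condExp_add hfi hci m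
    _ = μ[fun ω => ⨆ i, f i ω | m] + c := by rw [condExp_of_stronglyMeasurable hm hc hci]

lemma ctrl_self {Ω E : Type*} [AddCommGroup E] (y0 : E) (h : ℕ → Ω → E) (t : ℕ) (ω : Ω) :
    ctrl y0 h t t ω = y0 := by
  simp [ctrl]

section Residual

variable {Ω : Type*} {m0 : MeasurableSpace Ω} (μ : Measure Ω) (ℱ : Filtration ℕ m0)
  {l d : ℕ} (T : ℕ) (H V : ℕ → (Fin l → ℝ) → (Fin d → ℝ) → ℝ) (X : ℕ → Ω → (Fin d → ℝ))
  (t : ℕ) (y : Fin l → ℝ)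

/-- The integrand of `dualEstimate`: that estimate is `μ[⨆ π, dualPayoff … π.1 | ℱ t]` by
definition. -/
noncomputable def dualPayoff (h : ℕ → Ω → (Fin l → ℝ)) (ω : Ω) : ℝ :=
  (∑ s ∈ Ico t T,
      (H s (h s ω) (X s ω) - V (s + 1) (ctrl y h t (s + 1) ω) (X (s + 1) ω)
        + condV μ ℱ V X s (ctrl y h t (s + 1) ω) ω))
    + H T (h T ω) (X T ω)

noncomputable def bellmanResidual (h : ℕ → Ω → (Fin l → ℝ)) (ω : Ω) : ℝ :=
  ∑ s ∈ Ico t T,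
    (H s (h s ω) (X s ω) + condV μ ℱ V X s (ctrl y h t (s + 1) ω) ω
      - V s (ctrl y h t s ω) (X s ω))

variable {μ ℱ T H V X t y}

lemma dualPayoff_eq_bellmanResidual_add (ht : t ≤ T) {h : ℕ → Ω → (Fin l → ℝ)} {ω : Ω}
    (hT : V T (ctrl y h t T ω) (X T ω) = H T (h T ω) (X T ω)) :
    dualPayoff μ ℱ T H V X t y h ω = bellmanResidual μ ℱ T H V X t y h ω + V t y (X t ω) := by
  rw [dualPayoff, bellmanResidual, ← hT]
  simpa only [ctrl_self] using sum_Ico_sub_succ_add_eq ht (fun s => H s (h s ω) (X s ω))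
    (fun s => condV μ ℱ V X s (ctrl y h t (s + 1) ω) ω) (fun s => V s (ctrl y h t s ω) (X s ω))

lemma ae_dualPayoff_eq_bellmanResidual_add {K : ℕ → (Fin l → ℝ) → (Fin d → ℝ) → Set (Fin l → ℝ)}
    (hVT : ∀ᵐ ω ∂μ, ∀ y' hv, hv ∈ K T y' (X T ω) → V T y' (X T ω) = H T hv (X T ω))
    (ht : t ≤ T) {h : ℕ → Ω → (Fin l → ℝ)} (hadm : Admissible μ ℱ T K X t y h) :
    ∀ᵐ ω ∂μ, dualPayoff μ ℱ T H V X t y h ω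
      = bellmanResidual μ ℱ T H V X t y h ω + V t y (X t ω) := by
  filter_upwards [hadm.2, hVT] with ω hK hVTω
  exact dualPayoff_eq_bellmanResidual_add ht (hVTω _ _ (hK T ht le_rfl))

lemma ae_abs_condV_le [Countable Ω] {C : ℝ} (hV : ∀ s y' x, |V s y' x| ≤ C) :
    ∀ᵐ ω ∂μ, ∀ s y', |condV μ ℱ V X s y' ω| ≤ C := by
  refine ae_forall_of_countable fun s => ae_forall_of_countable fun y' => ?_
  exact ae_bdd_abs_condExp_of_ae_bdd_abs (ae_of_all μ fun ω => hV (s + 1) y' (X (s + 1) ω))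

lemma abs_bellmanResidual_le {C : ℝ} (hH : ∀ s hv x, |H s hv x| ≤ C)
    (hV : ∀ s y' x, |V s y' x| ≤ C) {ω : Ω} (hcond : ∀ s y', |condV μ ℱ V X s y' ω| ≤ C)
    (h : ℕ → Ω → (Fin l → ℝ)) :
    |bellmanResidual μ ℱ T H V X t y h ω| ≤ (T - t) • (3 * C) := by
  rw [← Nat.card_Ico]
  refine (abs_sum_le_sum_abs _ _).trans (sum_le_card_nsmul _ _ _ fun s _ => ?_)
  have h₁ := abs_le.1 (hH s (h s ω) (X s ω))
  have h₂ := abs_le.1 (hcond s (ctrl y h t (s + 1) ω))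
  have h₃ := abs_le.1 (hV s (ctrl y h t s ω) (X s ω))
  exact abs_le.2 ⟨by linarith, by linarith⟩

lemma bellmanResidual_eq_of_mem_measurableAtom (hX : ∀ s, Measurable[ℱ s] (X s))
    {h : ℕ → Ω → (Fin l → ℝ)} (hh : ∀ s, Measurable[ℱ s] (h s)) {ω ω' : Ω}
    (hω : ω' ∈ measurableAtom ω) :
    bellmanResidual μ ℱ T H V X t y h ω' = bellmanResidual μ ℱ T H V X t y h ω := by
  have hX' : ∀ s, X s ω' = X s ω := fun s =>
    ((hX s).mono (ℱ.le s) le_rfl).eq_of_mem_measurableAtom hω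
  have hh' : ∀ s, h s ω' = h s ω := fun s =>
    ((hh s).mono (ℱ.le s) le_rfl).eq_of_mem_measurableAtom hω
  have hcond : ∀ s y', condV μ ℱ V X s y' ω' = condV μ ℱ V X s y' ω := fun s _ =>
    (stronglyMeasurable_condExp.measurable.mono (ℱ.le s) le_rfl).eq_of_mem_measurableAtom hω
  simp only [bellmanResidual, ctrl, hX', hh', hcond]

end Residual

theorem dual_difference_representation_general
    {Ω : Type*} [Fintype Ω] {m0 : MeasurableSpace Ω}
    (μ : Measure Ω) [IsProbabilityMeasure μ] (ℱ : Filtration ℕ m0)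
    {l d : ℕ} (T : ℕ)
    (X : ℕ → Ω → (Fin d → ℝ)) (hX : ∀ t', Measurable[ℱ t'] (X t'))
    (H : ℕ → (Fin l → ℝ) → (Fin d → ℝ) → ℝ)
    (K : ℕ → (Fin l → ℝ) → (Fin d → ℝ) → Set (Fin l → ℝ))
    (V : ℕ → (Fin l → ℝ) → (Fin d → ℝ) → ℝ)
    (C : ℝ) (hCH : ∀ s (hv : Fin l → ℝ) (x : Fin d → ℝ), |H s hv x| ≤ C)
    (hCV : ∀ s (y' : Fin l → ℝ) (x : Fin d → ℝ), |V s y' x| ≤ C)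
    -- terminal consistency: `V_T(y_T, X_T) = H_T(h_T, X_T)` for admissible exercise
    (hVT : ∀ y' hv : Fin l → ℝ, ∀ᵐ ω ∂μ, hv ∈ K T y' (X T ω) →
      V T y' (X T ω) = H T hv (X T ω))
    (t : ℕ) (ht : t ≤ T) (y : Fin l → ℝ)
    (hadm : Nonempty {h : ℕ → Ω → (Fin l → ℝ) // Admissible μ ℱ T K X t y h}) :
    ∀ᵐ ω ∂μ,
      dualEstimate μ ℱ T H K V X t y ω - V t y (X t ω)
        = (μ[fun ω' => ⨆ π : {h : ℕ → Ω → (Fin l → ℝ) // Admissible μ ℱ T K X t y h},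
            ∑ s ∈ Finset.Ico t T,
              (H s (π.1 s ω') (X s ω')
                + condV μ ℱ V X s (ctrl y π.1 t (s + 1) ω') ω'
                - V s (ctrl y π.1 t s ω') (X s ω')) | ℱ t]) ω := by
  have hpath : ∀ᵐ ω ∂μ, ∀ π : {h // Admissible μ ℱ T K X t y h},
      dualPayoff μ ℱ T H V X t y π.1 ω = bellmanResidual μ ℱ T H V X t y π.1 ω + V t y (X t ω) :=
    ae_forall_of_countable fun π => ae_dualPayoff_eq_bellmanResidual_add
      (ae_forall_of_countable fun y' => ae_forall_of_countable (hVT y')) ht π.2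
  have hbound : ∀ᵐ ω ∂μ, ∀ π : {h // Admissible μ ℱ T K X t y h},
      |bellmanResidual μ ℱ T H V X t y π.1 ω| ≤ (T - t) • (3 * C) :=
    (ae_abs_condV_le hCV).mono fun ω hω π => abs_bellmanResidual_le hCH hCV hω π.1
  have hmeas : Measurable fun ω => ⨆ π : {h // Admissible μ ℱ T K X t y h},
      bellmanResidual μ ℱ T H V X t y π.1 ω :=
    measurable_of_forall_mem_measurableAtom fun _ _ hω => iSup_congr fun π =>
      bellmanResidual_eq_of_mem_measurableAtom hX π.2.1 hω
  have hc : Measurable[ℱ t] fun ω => V t y (X t ω) :=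
    measurable_of_forall_mem_measurableAtom fun _ _ hω =>
      congrArg (V t y) ((hX t).eq_of_mem_measurableAtom hω)
  have hci : Integrable (fun ω => V t y (X t ω)) μ :=
    .of_bound (hc.mono (ℱ.le t) le_rfl).aestronglyMeasurable C
      (ae_of_all μ fun ω => hCV t y (X t ω))
  filter_upwards [condExp_congr_ae (m := ℱ t) (hpath.mono fun ω hω => iSup_congr hω),
    condExp_ciSup_add_ae_eq (ℱ.le t) hmeas.aestronglyMeasurable hbound hc.stronglyMeasurable hci]
    with ω h₁ h₂
  rw [sub_eq_iff_eq_add]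
  exact h₁.trans h₂

/-- Lemma 3.3: difference representation between the dual upper
estimate and the a priori estimate. -/
theorem dual_difference_representation
    {Ω : Type*} [Fintype Ω] {m0 : MeasurableSpace Ω}
    (μ : Measure Ω) [IsProbabilityMeasure μ] (ℱ : Filtration ℕ m0)
    {l d : ℕ} (T : ℕ)
    (X : ℕ → Ω → (Fin d → ℝ)) (hX : ∀ t', Measurable[ℱ t'] (X t'))
    (H : ℕ → (Fin l → ℝ) → (Fin d → ℝ) → ℝ)
    (K : ℕ → (Fin l → ℝ) → (Fin d → ℝ) → Set (Fin l → ℝ))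
    (V : ℕ → (Fin l → ℝ) → (Fin d → ℝ) → ℝ)
    (hVmeas : ∀ t' y', Measurable (V t' y'))
    (C : ℝ) (hCH : ∀ s (hv : Fin l → ℝ) (x : Fin d → ℝ), |H s hv x| ≤ C)
    (hCV : ∀ s (y' : Fin l → ℝ) (x : Fin d → ℝ), |V s y' x| ≤ C)
    -- terminal consistency: `V_T(y_T, X_T) = H_T(h_T, X_T)` for admissible exercise
    (hVT : ∀ y' hv : Fin l → ℝ, ∀ᵐ ω ∂μ, hv ∈ K T y' (X T ω) →
      V T y' (X T ω) = H T hv (X T ω))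
    (t : ℕ) (ht : t ≤ T) (y : Fin l → ℝ)
    (hadm : Nonempty {h : ℕ → Ω → (Fin l → ℝ) // Admissible μ ℱ T K X t y h}) :
    ∀ᵐ ω ∂μ,
      dualEstimate μ ℱ T H K V X t y ω - V t y (X t ω)
        = (μ[fun ω' => ⨆ π : {h : ℕ → Ω → (Fin l → ℝ) // Admissible μ ℱ T K X t y h},
            ∑ s ∈ Finset.Ico t T,
              (H s (π.1 s ω') (X s ω')
                + condV μ ℱ V X s (ctrl y π.1 t (s + 1) ω') ω'
                - V s (ctrl y π.1 t s ω') (X s ω')) | ℱ t]) ω :=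
  dual_difference_representation_general μ ℱ T X hX H K V C hCH hCV hVT t ht y hadm
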